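/- arXiv:2404.08914 — 3 statements merged into one kernel-verified Lean document; each statement's English description precedes it below -/
import Mathlib

section
/- Let R be a commutative ring with unity having some non-trivial idempotent. Then: (i) if |U(R)| = 1, the graph Cl₂(R) is a complete graph; (ii) if |U(R)| ≥ 2, two distinct vertices (e,u) and (f,v) of Cl₂(R) are mutually maximally distant if and only if one of the following holds: (a) e = f = 1 and uv ≠ 1; (b) e ≠ 1, f ≠ 1, ef ≠ 0 and uv ≠ 1; (c) e = 1, f ≠ 1 and u = v with u² ≠ 1 (i.e. u = v ∈ U''(R)). -/
variable {V : Type*}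

/-- In a graph `G`, `u` is maximally distant from `v` if `d(v,w) ≤ d(u,v)` for every
neighbour `w` of `u`. -/
def IsMaxDistFrom (G : SimpleGraph V) (u v : V) : Prop :=
  ∀ w ∈ G.neighborSet u, G.dist v w ≤ G.dist u v

/-- `u` and `v` are mutually maximally distant in `G`. -/
def IsMMD (G : SimpleGraph V) (u v : V) : Prop :=
  IsMaxDistFrom G u v ∧ IsMaxDistFrom G v u

/-- The boundary of a graph: the set of vertices that are mutually maximally distant
from some other vertex.  This is the vertex set of the strong resolving graph. -/
def graphBoundary (G : SimpleGraph V) : Set V :=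
  {u | ∃ v, u ≠ v ∧ IsMMD G u v}

/-- The strong resolving graph, realised on the full vertex set (vertices outside the
boundary are isolated): two distinct vertices are adjacent iff they are mutually
maximally distant. -/
def srGraph (G : SimpleGraph V) : SimpleGraph V where
  Adj u v := u ≠ v ∧ IsMMD G u v
  symm := ⟨fun u v h => ⟨h.1.symm, h.2.2, h.2.1⟩⟩
  loopless := ⟨fun u h => h.1 rfl⟩

/-- The independence number of a graph: the largest cardinality of a finite set of
pairwise non-adjacent vertices. -/
noncomputable def indNum (G : SimpleGraph V) : ℕ :=
  sSup {n | ∃ s : Finset V, ((s : Set V).Pairwise fun a b => ¬ G.Adj a b) ∧ s.card = n}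

/-- `S` is a strong resolving set of `G`: every pair of distinct vertices `u, v` is
strongly resolved by some `w ∈ S`, i.e. `v` lies on a shortest `u`-`w` path or `u` lies
on a shortest `v`-`w` path. -/
def IsStrongResolvingSet (G : SimpleGraph V) (S : Set V) : Prop :=
  ∀ u v : V, u ≠ v → ∃ w ∈ S,
    G.dist u w = G.dist u v + G.dist v w ∨ G.dist v w = G.dist v u + G.dist u w

/-- The strong metric dimension of a graph: the smallest cardinality of a (finite)
strong resolving set. -/
noncomputable def sdim (G : SimpleGraph V) : ℕ :=
  sInf {n | ∃ S : Finset V, IsStrongResolvingSet G (S : Set V) ∧ S.card = n}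

/-- Vertices of the clean graph: pairs `(e, u)` with `e` an idempotent and `u` a unit. -/
abbrev CleanVtx (R : Type*) [CommRing R] : Type _ := {e : R // IsIdempotentElem e} × Rˣ

/-- The clean graph `Cl(R)` of a commutative ring `R`: distinct vertices `(e,u)`, `(f,v)`
are adjacent iff `e * f = 0` or `u * v = 1`. -/
def cleanGraph (R : Type*) [CommRing R] : SimpleGraph (CleanVtx R) where
  Adj x y := x ≠ y ∧ ((x.1 : R) * (y.1 : R) = 0 ∨ (x.2 : R) * (y.2 : R) = 1)
  symm := by
    refine ⟨?_⟩
    rintro x y ⟨hxy, h | h⟩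
    · exact ⟨hxy.symm, Or.inl (by rwa [mul_comm])⟩
    · exact ⟨hxy.symm, Or.inr (by rwa [mul_comm])⟩
  loopless := ⟨fun x h => h.1 rfl⟩

/-- The vertex set of `Cl₂(R)`: clean vertices `(e,u)` with `e ≠ 0`. -/
def clean2Set (R : Type*) [CommRing R] : Set (CleanVtx R) := {x | (x.1 : R) ≠ 0}

/-- `Cl₂(R)`, the subgraph of `Cl(R)` induced on the vertices `(e,u)` with `e ≠ 0`. -/
def clean2Graph (R : Type*) [CommRing R] : SimpleGraph (clean2Set R) :=
  SimpleGraph.induce (clean2Set R) (cleanGraph R)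

/-- `U''(R)`: the set of units `u` with `u² ≠ 1`. -/
def uSecond (R : Type*) [CommRing R] : Set Rˣ := {u | (u : R) * (u : R) ≠ 1}

/-- `|Id(R)*|`: the number of non-trivial idempotents of `R`. -/
noncomputable def idStarNum (R : Type*) [CommRing R] : ℕ :=
  {e : R | IsIdempotentElem e ∧ e ≠ 0 ∧ e ≠ 1}.ncard

/-- `|Id⊥(R)*|`: the maximum cardinality of a set of nonzero pairwise orthogonal
idempotents of `R`. -/
noncomputable def orthIdemNum (R : Type*) [CommRing R] : ℕ :=
  sSup {n | ∃ s : Finset R, (∀ e ∈ s, IsIdempotentElem e ∧ e ≠ 0) ∧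
    ((s : Set R).Pairwise fun e f => e * f = 0) ∧ s.card = n}

namespace CleanAux

open SimpleGraph

variable {R : Type*} [CommRing R]

/-- Constructor for vertices of `Cl₂(R)`. -/
def mkV (e : R) (he : IsIdempotentElem e) (h0 : e ≠ 0) (u : Rˣ) : clean2Set R :=
  ⟨(⟨e, he⟩, u), h0⟩

@[simp] lemma mkV_e (e : R) (he) (h0) (u : Rˣ) : ((mkV e he h0 u).1.1.1 : R) = e := rfl
@[simp] lemma mkV_u (e : R) (he) (h0) (u : Rˣ) : (mkV e he h0 u).1.2 = u := rfl

lemma v_ext_iff (x y : clean2Set R) :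
    x = y ↔ (x.1.1.1 : R) = y.1.1.1 ∧ x.1.2 = y.1.2 := by
  constructor
  · rintro rfl; exact ⟨rfl, rfl⟩
  · rintro ⟨h1, h2⟩
    exact Subtype.ext (Prod.ext (Subtype.ext h1) h2)

lemma ne_of_e_ne {x y : clean2Set R} (h : (x.1.1.1 : R) ≠ y.1.1.1) : x ≠ y :=
  fun he => h (by rw [he])

lemma ne_of_u_ne {x y : clean2Set R} (h : x.1.2 ≠ y.1.2) : x ≠ y :=
  fun he => h (by rw [he])

lemma e_ne_zero (x : clean2Set R) : (x.1.1.1 : R) ≠ 0 := x.2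

lemma e_idem (x : clean2Set R) : (x.1.1.1 : R) * x.1.1.1 = x.1.1.1 := x.1.1.2

lemma adj_iff (x y : clean2Set R) :
    (clean2Graph R).Adj x y ↔
      x ≠ y ∧ ((x.1.1.1 : R) * y.1.1.1 = 0 ∨ (x.1.2 : R) * (y.1.2 : R) = 1) := by
  rw [clean2Graph, SimpleGraph.induce_adj]
  show ((x : CleanVtx R) ≠ (y : CleanVtx R) ∧ _) ↔ _
  rw [Subtype.coe_ne_coe]

lemma umul_one_iff (u v : Rˣ) : (u : R) * (v : R) = 1 ↔ v = u⁻¹ := by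
  rw [← Units.val_mul, Units.val_eq_one, mul_eq_one_iff_inv_eq, eq_comm]

lemma idem_mul_one_sub {e : R} (h : IsIdempotentElem e) : e * (1 - e) = 0 := by
  rw [mul_one_sub, h.eq, sub_self]

lemma one_sub_ne_zero {e : R} (h : e ≠ 1) : (1 : R) - e ≠ 0 :=
  fun hh => h (by linear_combination -hh)

lemma exists_walk_le_two {x y : clean2Set R} (hx : (x.1.1.1 : R) ≠ 1) :
    ∃ p : (clean2Graph R).Walk x y, p.length ≤ 2 := by
  by_cases hxy : x = y
  · subst hxy; exact ⟨.nil, by simp⟩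
  by_cases hadj : (clean2Graph R).Adj x y
  · exact ⟨hadj.toWalk, by simp⟩
  · have he : IsIdempotentElem (x.1.1.1 : R) := x.1.1.2
    have hxe0 : (x.1.1.1 : R) * (1 - x.1.1.1) = 0 := idem_mul_one_sub he
    have h1 : (clean2Graph R).Adj x (mkV (1 - x.1.1.1) he.one_sub (one_sub_ne_zero hx) (y.1.2)⁻¹) := by
      rw [adj_iff]
      refine ⟨fun h => ?_, Or.inl (by simpa using hxe0)⟩
      have h1 := ((v_ext_iff _ _).mp h).1
      simp only [mkV_e] at h1
      apply x.2
      have : (x.1.1.1 : R) * x.1.1.1 = 0 := by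
        nth_rewrite 2 [h1]
        exact hxe0
      rwa [he.eq] at this
    have h2 : (clean2Graph R).Adj (mkV (1 - x.1.1.1) he.one_sub (one_sub_ne_zero hx) (y.1.2)⁻¹) y := by
      rw [adj_iff]
      refine ⟨fun h => ?_, Or.inr (by simp [Units.inv_mul])⟩
      have h1 := ((v_ext_iff _ _).mp h).1
      simp only [mkV_e] at h1
      apply hadj
      rw [adj_iff]
      exact ⟨hxy, Or.inl (by rw [← h1]; exact hxe0)⟩
    exact ⟨.cons h1 (.cons h2 .nil), by simp⟩

lemma exists_walk_le_three (hid : ∃ e : R, IsIdempotentElem e ∧ e ≠ 0 ∧ e ≠ 1)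
    (x y : clean2Set R) :
    ∃ p : (clean2Graph R).Walk x y, p.length ≤ 3 := by
  by_cases hx : (x.1.1.1 : R) = 1
  · by_cases hy : (y.1.1.1 : R) = 1
    · obtain ⟨e₀, he₀, h0, h1⟩ := hid
      have h10 : (1 : R) - e₀ ≠ 0 := one_sub_ne_zero h1
      have horth : e₀ * ((1 : R) - e₀) = 0 := idem_mul_one_sub he₀
      have ha : (clean2Graph R).Adj x (mkV e₀ he₀ h0 (x.1.2)⁻¹) := by
        rw [adj_iff]
        refine ⟨fun h => h1 ?_, Or.inr (by simp [Units.mul_inv])⟩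
        have := ((v_ext_iff _ _).mp h).1
        simp only [mkV_e, hx] at this
        exact this.symm
      have hb : (clean2Graph R).Adj (mkV e₀ he₀ h0 (x.1.2)⁻¹)
          (mkV (1 - e₀) he₀.one_sub h10 (y.1.2)⁻¹) := by
        rw [adj_iff]
        refine ⟨fun h => ?_, Or.inl (by simpa using horth)⟩
        have he : e₀ = 1 - e₀ := by simpa using ((v_ext_iff _ _).mp h).1
        apply h0
        calc e₀ = e₀ * e₀ := he₀.eq.symm
        _ = e₀ * (1 - e₀) := by rw [← he]
        _ = 0 := horth
      have hc : (clean2Graph R).Adj (mkV (1 - e₀) he₀.one_sub h10 (y.1.2)⁻¹) y := by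
        rw [adj_iff]
        refine ⟨fun h => ?_, Or.inr (by simp [Units.inv_mul])⟩
        have := ((v_ext_iff _ _).mp h).1
        simp only [mkV_e, hy] at this
        exact h0 (by linear_combination -this)
      exact ⟨.cons ha (.cons hb (.cons hc .nil)), by simp⟩
    · obtain ⟨p, hp⟩ := exists_walk_le_two (y := x) hy
      exact ⟨p.reverse, by simp; omega⟩
  · obtain ⟨p, hp⟩ := exists_walk_le_two (y := y) hx
    exact ⟨p, by omega⟩

lemma reach (hid : ∃ e : R, IsIdempotentElem e ∧ e ≠ 0 ∧ e ≠ 1) (x y : clean2Set R) :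
    (clean2Graph R).Reachable x y :=
  ⟨(exists_walk_le_three hid x y).choose⟩

lemma dist_le_two {x y : clean2Set R} (hx : (x.1.1.1 : R) ≠ 1) :
    (clean2Graph R).dist x y ≤ 2 := by
  obtain ⟨p, hp⟩ := exists_walk_le_two (y := y) hx
  exact le_trans (SimpleGraph.dist_le p) hp

lemma dist_le_three (hid : ∃ e : R, IsIdempotentElem e ∧ e ≠ 0 ∧ e ≠ 1)
    (x y : clean2Set R) : (clean2Graph R).dist x y ≤ 3 := by
  obtain ⟨p, hp⟩ := exists_walk_le_three hid x y
  exact le_trans (SimpleGraph.dist_le p) hp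

lemma two_le_dist (hid : ∃ e : R, IsIdempotentElem e ∧ e ≠ 0 ∧ e ≠ 1)
    {x y : clean2Set R} (hxy : x ≠ y) (hnadj : ¬ (clean2Graph R).Adj x y) :
    2 ≤ (clean2Graph R).dist x y := by
  have hr := reach hid x y
  have h0 : (clean2Graph R).dist x y ≠ 0 := by
    rw [ne_eq, hr.dist_eq_zero_iff]; exact hxy
  have h1 : (clean2Graph R).dist x y ≠ 1 :=
    fun h => hnadj (SimpleGraph.dist_eq_one_iff_adj.mp h)
  omega

lemma dist_eq_two (hid : ∃ e : R, IsIdempotentElem e ∧ e ≠ 0 ∧ e ≠ 1)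
    {x y : clean2Set R} (h : (x.1.1.1 : R) ≠ 1 ∨ (y.1.1.1 : R) ≠ 1)
    (hxy : x ≠ y) (hnadj : ¬ (clean2Graph R).Adj x y) :
    (clean2Graph R).dist x y = 2 := by
  refine le_antisymm ?_ (two_le_dist hid hxy hnadj)
  rcases h with h | h
  · exact dist_le_two h
  · rw [SimpleGraph.dist_comm]; exact dist_le_two h

lemma dist_eq_three (hid : ∃ e : R, IsIdempotentElem e ∧ e ≠ 0 ∧ e ≠ 1)
    {x y : clean2Set R} (hx : (x.1.1.1 : R) = 1) (hy : (y.1.1.1 : R) = 1)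
    (hxy : x ≠ y) (huv : (x.1.2 : R) * (y.1.2 : R) ≠ 1) :
    (clean2Graph R).dist x y = 3 := by
  obtain ⟨e₀, he₀, h₀, h₁⟩ := hid
  have hR : Nontrivial R := nontrivial_of_ne e₀ 1 h₁
  have hnadj : ¬ (clean2Graph R).Adj x y := by
    rw [adj_iff]
    rintro ⟨-, h | h⟩
    · rw [hx, hy, one_mul] at h; exact one_ne_zero h
    · exact huv h
  have hge := two_le_dist ⟨e₀, he₀, h₀, h₁⟩ hxy hnadj
  have hle := dist_le_three ⟨e₀, he₀, h₀, h₁⟩ x y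
  have hne2 : (clean2Graph R).dist x y ≠ 2 := by
    intro hd
    obtain ⟨p, hp⟩ := (reach ⟨e₀, he₀, h₀, h₁⟩ x y).exists_walk_length_eq_dist
    rw [hd] at hp
    have h01 := p.adj_getVert_succ (i := 0) (by omega)
    have h12 := p.adj_getVert_succ (i := 1) (by omega)
    rw [p.getVert_zero] at h01
    have hv2 : p.getVert (1 + 1) = y := by
      rw [show 1 + 1 = p.length by omega, p.getVert_length]
    rw [hv2] at h12
    set m := p.getVert 1 with hm
    rw [adj_iff] at h01 h12
    have hu1 : (x.1.2 : R) * (m.1.2 : R) = 1 := by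
      rcases h01.2 with h | h
      · rw [hx, one_mul] at h; exact absurd h m.2
      · exact h
    have hu2 : (m.1.2 : R) * (y.1.2 : R) = 1 := by
      rcases h12.2 with h | h
      · rw [hy, mul_one] at h; exact absurd h m.2
      · exact h
    rw [umul_one_iff] at hu1 hu2
    have : x.1.2 = y.1.2 := by
      rw [hu2, hu1, inv_inv]
    exact hxy ((v_ext_iff x y).mpr ⟨hx.trans hy.symm, this⟩)
  omega

lemma mmd_symm {x y : clean2Set R} (h : IsMMD (clean2Graph R) x y) :
    IsMMD (clean2Graph R) y x := ⟨h.2, h.1⟩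

lemma not_mmd_of_witness (hid : ∃ e : R, IsIdempotentElem e ∧ e ≠ 0 ∧ e ≠ 1)
    {x y w : clean2Set R} (hadj : (clean2Graph R).Adj x y)
    (hxw : (clean2Graph R).Adj x w) (hwy : w ≠ y)
    (h1 : (y.1.1.1 : R) * w.1.1.1 ≠ 0) (h2 : (y.1.2 : R) * (w.1.2 : R) ≠ 1) :
    ¬ IsMMD (clean2Graph R) x y := by
  intro hm
  have hd1 : (clean2Graph R).dist x y = 1 := SimpleGraph.dist_eq_one_iff_adj.mpr hadj
  have hle := hm.1 w hxw
  have hnadj : ¬ (clean2Graph R).Adj y w := by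
    rw [adj_iff]; rintro ⟨-, h | h⟩
    · exact h1 h
    · exact h2 h
  have := two_le_dist hid hwy.symm hnadj
  omega

lemma exists_good_unit [Nontrivial Rˣ] (v : Rˣ) :
    ∃ t : Rˣ, t ≠ v ∧ (v : R) * (t : R) ≠ 1 := by
  by_cases hv : (v : R) * (v : R) = 1
  · obtain ⟨t, ht⟩ := exists_ne v
    refine ⟨t, ht, fun h => ht ?_⟩
    rw [umul_one_iff] at h hv
    rw [h, ← hv]
  · refine ⟨1, fun h => hv ?_, fun h => hv ?_⟩
    · rw [← h]; norm_num
    · have hv1 : (v : R) = 1 := by simpa using h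
      rw [hv1, one_mul]

lemma not_mmd_adj (hid : ∃ e : R, IsIdempotentElem e ∧ e ≠ 0 ∧ e ≠ 1) [Nontrivial Rˣ]
    {x y : clean2Set R} (hadj : (clean2Graph R).Adj x y) :
    ¬ IsMMD (clean2Graph R) x y := by
  obtain ⟨e₀, he₀, h₀0, h₀1⟩ := hid
  have hid' : ∃ e : R, IsIdempotentElem e ∧ e ≠ 0 ∧ e ≠ 1 := ⟨e₀, he₀, h₀0, h₀1⟩
  have hR : Nontrivial R := nontrivial_of_ne e₀ 1 h₀1
  obtain ⟨hxy, hor⟩ := (adj_iff x y).mp hadj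
  by_cases huv : x.1.2 = y.1.2
  · -- same unit
    have hef : (x.1.1.1 : R) ≠ y.1.1.1 := by
      intro h; exact hxy ((v_ext_iff x y).mpr ⟨h, huv⟩)
    by_cases hef0 : (x.1.1.1 : R) * y.1.1.1 = 0
    · -- orthogonal idempotents, same unit
      obtain ⟨t, ht, hvt⟩ := exists_good_unit (R := R) (y.1.2)
      apply not_mmd_of_witness hid' hadj
        (w := mkV y.1.1.1 y.1.1.2 (e_ne_zero y) t)
      · rw [adj_iff]
        refine ⟨fun h => ?_, Or.inl (by simpa using hef0)⟩
        exact hef (by simpa using ((v_ext_iff _ _).mp h).1)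
      · exact ne_of_u_ne (by simpa using ht)
      · simpa [e_idem y] using e_ne_zero y
      · simpa using hvt
    · -- same unit, non-orthogonal: then u = u⁻¹
      have huu : (x.1.2 : R) * (y.1.2 : R) = 1 := hor.resolve_left hef0
      have hself : y.1.2 = (y.1.2)⁻¹ := by
        rw [umul_one_iff] at huu
        rwa [huv] at huu
      obtain ⟨t, ht⟩ := exists_ne (y.1.2)
      have hvt : (y.1.2 : R) * (t : R) ≠ 1 := by
        rw [ne_eq, umul_one_iff]; intro h; exact ht (h.trans hself.symm)
      by_cases hfe : (y.1.1.1 : R) * (1 - x.1.1.1) = 0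
      · -- use mirror witness on (y, x)
        have hfe' : (x.1.1.1 : R) * (1 - y.1.1.1) ≠ 0 := by
          intro h
          apply hef
          have h1 : (x.1.1.1 : R) = x.1.1.1 * y.1.1.1 := by linear_combination h
          have h2 : (y.1.1.1 : R) = y.1.1.1 * x.1.1.1 := by linear_combination hfe
          calc (x.1.1.1 : R) = x.1.1.1 * y.1.1.1 := h1
          _ = y.1.1.1 * x.1.1.1 := mul_comm _ _
          _ = y.1.1.1 := h2.symm
        have hy1 : (y.1.1.1 : R) ≠ 1 := by
          intro h; rw [h, sub_self, mul_zero] at hfe'; exact hfe' rfl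
        intro hm
        refine not_mmd_of_witness hid' (hadj.symm)
          (w := mkV (1 - y.1.1.1) (y.1.1.2).one_sub (one_sub_ne_zero hy1) t)
          ?_ ?_ ?_ ?_ (mmd_symm hm)
        · rw [adj_iff]
          refine ⟨ne_of_u_ne fun h => ?_, Or.inl (by simpa using idem_mul_one_sub y.1.1.2)⟩
          simp only [mkV_u] at h
          exact ht h.symm
        · refine ne_of_u_ne fun h => ?_
          simp only [mkV_u] at h
          exact ht (h.trans huv)
        · simpa using hfe'
        · simp only [mkV_u]
          rw [ne_eq, umul_one_iff]
          intro h
          apply ht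
          rw [h, huv, ← hself]
      · -- direct witness
        have hx1 : (x.1.1.1 : R) ≠ 1 := by
          intro h; rw [h, sub_self, mul_zero] at hfe; exact hfe rfl
        apply not_mmd_of_witness hid' hadj
          (w := mkV (1 - x.1.1.1) (x.1.1.2).one_sub (one_sub_ne_zero hx1) t)
        · rw [adj_iff]
          refine ⟨ne_of_u_ne fun h => ?_, Or.inl (by simpa using idem_mul_one_sub x.1.1.2)⟩
          simp only [mkV_u] at h
          exact ht (h.symm.trans huv)
        · exact ne_of_u_ne (by simpa using ht)
        · simpa using hfe
        · simpa using hvt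
  · -- different units
    by_cases hf : (y.1.1.1 : R) = 1
    · -- f = 1; mirror witnesses
      have hv2 : y.1.2 ≠ (y.1.2)⁻¹ := by
        intro h
        have he0 : (x.1.1.1 : R) * y.1.1.1 ≠ 0 := by
          rw [hf, mul_one]; exact e_ne_zero x
        have := hor.resolve_left he0
        rw [umul_one_iff] at this
        exact huv (by rw [← inv_inv x.1.2, ← this, ← h])
      intro hm
      by_cases hxw : (x.1.1.1 : R) = 1 ∧ x.1.2 = (y.1.2)⁻¹
      · refine not_mmd_of_witness hid' hadj.symm
          (w := mkV e₀ he₀ h₀0 (y.1.2)⁻¹) ?_ ?_ ?_ ?_ (mmd_symm hm)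
        · rw [adj_iff]
          refine ⟨ne_of_e_ne fun h => ?_, Or.inr (by simp [Units.mul_inv])⟩
          simp only [mkV_e, hf] at h
          exact h₀1 h.symm
        · refine ne_of_e_ne fun h => ?_
          simp only [mkV_e, hxw.1] at h
          exact h₀1 h
        · simpa [hxw.1] using h₀0
        · simp only [mkV_u]
          rw [hxw.2, ne_eq, umul_one_iff]
          intro h
          exact hv2 (inv_injective h)
      · refine not_mmd_of_witness hid' hadj.symm
          (w := mkV 1 IsIdempotentElem.one one_ne_zero (y.1.2)⁻¹) ?_ ?_ ?_ ?_ (mmd_symm hm)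
        · rw [adj_iff]
          refine ⟨fun h => hv2 (by simpa using ((v_ext_iff _ _).mp h).2), Or.inr (by simp [Units.mul_inv])⟩
        · intro h
          rw [v_ext_iff] at h
          exact hxw ⟨by simpa using h.1.symm, by simpa using h.2.symm⟩
        · simpa using e_ne_zero x
        · simp only [mkV_u]
          rw [ne_eq, umul_one_iff]
          intro h
          exact huv (inv_injective h).symm
    · -- f ≠ 1: direct witness (1, u⁻¹)
      have hnx : ¬ ((x.1.1.1 : R) = 1 ∧ x.1.2 = (x.1.2)⁻¹) := by
        rintro ⟨he1, hu2⟩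
        have he0 : (x.1.1.1 : R) * y.1.1.1 ≠ 0 := by
          rw [he1, one_mul]; exact e_ne_zero y
        have := hor.resolve_left he0
        rw [umul_one_iff] at this
        exact huv (by rw [this, ← hu2])
      apply not_mmd_of_witness hid' hadj
        (w := mkV 1 IsIdempotentElem.one one_ne_zero (x.1.2)⁻¹)
      · rw [adj_iff]
        refine ⟨fun h => ?_, Or.inr (by simp [Units.mul_inv])⟩
        rw [v_ext_iff] at h
        exact hnx ⟨by simpa using h.1, by simpa using h.2⟩
      · exact ne_of_e_ne fun h => hf (by simpa using h.symm)
      · simpa using e_ne_zero y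
      · simp only [mkV_u]
        rw [ne_eq, umul_one_iff]
        intro h
        exact huv (inv_injective h)

lemma mmd_of_ones (hid : ∃ e : R, IsIdempotentElem e ∧ e ≠ 0 ∧ e ≠ 1)
    {x y : clean2Set R} (hx : (x.1.1.1 : R) = 1) (hy : (y.1.1.1 : R) = 1)
    (hxy : x ≠ y) (huv : (x.1.2 : R) * (y.1.2 : R) ≠ 1) :
    IsMMD (clean2Graph R) x y := by
  have hd := dist_eq_three hid hx hy hxy huv
  unfold IsMMD IsMaxDistFrom
  constructor
  · intro w _; rw [hd]; exact dist_le_three hid y w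
  · intro w _
    rw [SimpleGraph.dist_comm (u := y) (v := x), hd]
    exact dist_le_three hid x w

lemma mmd_b (hid : ∃ e : R, IsIdempotentElem e ∧ e ≠ 0 ∧ e ≠ 1)
    {x y : clean2Set R} (hx : (x.1.1.1 : R) ≠ 1) (hy : (y.1.1.1 : R) ≠ 1)
    (hxy : x ≠ y) (hnadj : ¬ (clean2Graph R).Adj x y) :
    IsMMD (clean2Graph R) x y := by
  have hd := dist_eq_two hid (Or.inl hx) hxy hnadj
  unfold IsMMD IsMaxDistFrom
  constructor
  · intro w _; rw [hd]; exact dist_le_two hy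
  · intro w _
    rw [SimpleGraph.dist_comm (u := y) (v := x), hd]
    exact dist_le_two hx

lemma mmd_c (hid : ∃ e : R, IsIdempotentElem e ∧ e ≠ 0 ∧ e ≠ 1)
    {x y : clean2Set R} (hx : (x.1.1.1 : R) = 1) (hy : (y.1.1.1 : R) ≠ 1)
    (hu : x.1.2 = y.1.2) (hus : (x.1.2 : R) * (x.1.2 : R) ≠ 1) :
    IsMMD (clean2Graph R) x y := by
  have hxy : x ≠ y := ne_of_e_ne (fun h => hy (h ▸ hx))
  have hnadj : ¬ (clean2Graph R).Adj x y := by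
    rw [adj_iff]
    rintro ⟨-, h | h⟩
    · rw [hx, one_mul] at h; exact e_ne_zero y h
    · rw [← hu] at h; exact hus h
  have hd := dist_eq_two hid (Or.inr hy) hxy hnadj
  unfold IsMMD IsMaxDistFrom
  constructor
  · intro w _
    rw [hd]
    exact dist_le_two hy
  · intro w hw
    rw [SimpleGraph.dist_comm (u := y) (v := x), hd]
    rw [SimpleGraph.mem_neighborSet, adj_iff] at hw
    by_cases hw1 : (w.1.1.1 : R) = 1
    · have huw : w.1.2 = (y.1.2)⁻¹ := by
        rw [← umul_one_iff]
        rcases hw.2 with h | h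
        · rw [hw1, mul_one] at h; exact absurd h (e_ne_zero y)
        · exact h
      have hadjxw : (clean2Graph R).Adj x w := by
        rw [adj_iff]
        refine ⟨ne_of_u_ne fun h => ?_, Or.inr ?_⟩
        · rw [huw, ← hu] at h
          apply hus
          nth_rewrite 2 [h]
          exact Units.mul_inv _
        · rw [huw, ← hu]
          exact Units.mul_inv _
      exact le_trans (SimpleGraph.dist_eq_one_iff_adj.mpr hadjxw).le one_le_two
    · rw [SimpleGraph.dist_comm]
      exact dist_le_two hw1

lemma mmd_forward_c (hid : ∃ e : R, IsIdempotentElem e ∧ e ≠ 0 ∧ e ≠ 1)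
    {x y : clean2Set R} (hx : (x.1.1.1 : R) = 1) (hy : (y.1.1.1 : R) ≠ 1)
    (hxy : x ≠ y) (huv : (x.1.2 : R) * (y.1.2 : R) ≠ 1)
    (hm : IsMMD (clean2Graph R) x y) : x.1.2 = y.1.2 := by
  obtain ⟨e₀, he₀, h₀0, h₀1⟩ := hid
  have hid' : ∃ e : R, IsIdempotentElem e ∧ e ≠ 0 ∧ e ≠ 1 := ⟨e₀, he₀, h₀0, h₀1⟩
  have hR : Nontrivial R := nontrivial_of_ne e₀ 1 h₀1
  have hnadj : ¬ (clean2Graph R).Adj x y := by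
    rw [adj_iff]
    rintro ⟨-, h | h⟩
    · rw [hx, one_mul] at h; exact e_ne_zero y h
    · exact huv h
  have hd := dist_eq_two hid' (Or.inr hy) hxy hnadj
  have hadjyw : (clean2Graph R).Adj y (mkV 1 IsIdempotentElem.one one_ne_zero (y.1.2)⁻¹) := by
    rw [adj_iff]
    refine ⟨ne_of_e_ne fun h => hy (by simpa using h), Or.inr (by simp [Units.mul_inv])⟩
  have hle := hm.2 _ ((SimpleGraph.mem_neighborSet _ _ _).mpr hadjyw)
  by_contra hne
  have h3 : (clean2Graph R).dist x (mkV 1 IsIdempotentElem.one one_ne_zero (y.1.2)⁻¹) = 3 := by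
    refine dist_eq_three hid' hx (by simp) (ne_of_u_ne fun h => ?_) ?_
    · simp only [mkV_u] at h
      apply huv
      rw [h]
      exact Units.inv_mul _
    · simp only [mkV_u]
      rw [ne_eq, umul_one_iff]
      intro h
      exact hne (inv_injective h).symm
  rw [SimpleGraph.dist_comm (u := y) (v := x), hd, h3] at hle
  omega

end CleanAux

open CleanAux in
theorem statement_1 (R : Type*) [CommRing R]
    (hid : ∃ e : R, IsIdempotentElem e ∧ e ≠ 0 ∧ e ≠ 1) :
    (Nat.card Rˣ = 1 → clean2Graph R = ⊤) ∧
    (Nontrivial Rˣ → ∀ x y : clean2Set R, x ≠ y →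
      (IsMMD (clean2Graph R) x y ↔
        ((x.1.1 : R) = 1 ∧ (y.1.1 : R) = 1 ∧ (x.1.2 : R) * (y.1.2 : R) ≠ 1) ∨
        ((x.1.1 : R) ≠ 1 ∧ (y.1.1 : R) ≠ 1 ∧ (x.1.1 : R) * (y.1.1 : R) ≠ 0 ∧
          (x.1.2 : R) * (y.1.2 : R) ≠ 1) ∨
        ((x.1.1 : R) = 1 ∧ (y.1.1 : R) ≠ 1 ∧ x.1.2 = y.1.2 ∧ x.1.2 ∈ uSecond R) ∨
        ((y.1.1 : R) = 1 ∧ (x.1.1 : R) ≠ 1 ∧ x.1.2 = y.1.2 ∧ x.1.2 ∈ uSecond R))) := by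
  obtain ⟨e₀, he₀, h₀0, h₀1⟩ := hid
  have hid' : ∃ e : R, IsIdempotentElem e ∧ e ≠ 0 ∧ e ≠ 1 := ⟨e₀, he₀, h₀0, h₀1⟩
  have hR : Nontrivial R := nontrivial_of_ne e₀ 1 h₀1
  constructor
  · intro hcard
    have hsub : Subsingleton Rˣ := (Nat.card_eq_one_iff_unique.mp hcard).1
    ext x y
    rw [CleanAux.adj_iff, SimpleGraph.top_adj]
    constructor
    · exact fun h => h.1
    · intro h
      refine ⟨h, Or.inr ?_⟩
      have h1 : x.1.2 = 1 := Subsingleton.elim _ _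
      have h2 : y.1.2 = 1 := Subsingleton.elim _ _
      rw [h1, h2]
      simp
  · intro hU x y hxy
    haveI := hU
    by_cases hadj : (clean2Graph R).Adj x y
    · have hor := ((adj_iff x y).mp hadj).2
      constructor
      · intro hm; exact absurd hm (not_mmd_adj hid' hadj)
      · rintro (⟨hx, hy, huv⟩ | ⟨hx, hy, hef, huv⟩ | ⟨hx, hy, hu, hus⟩ | ⟨hy, hx, hu, hus⟩)
        · rcases hor with h | h
          · rw [hx, hy, one_mul] at h; exact absurd h one_ne_zero
          · exact absurd h huv
        · rcases hor with h | h
          · exact absurd h hef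
          · exact absurd h huv
        · rcases hor with h | h
          · rw [hx, one_mul] at h; exact absurd h (e_ne_zero y)
          · rw [← hu] at h; exact absurd h hus
        · rcases hor with h | h
          · rw [hy, mul_one] at h; exact absurd h (e_ne_zero x)
          · rw [hu] at h
            rw [hu] at hus
            exact absurd h hus
    · have h' := hadj
      rw [adj_iff] at h'
      push_neg at h'
      obtain ⟨hef, huv⟩ := h' hxy
      by_cases hx : (x.1.1.1 : R) = 1 <;> by_cases hy : (y.1.1.1 : R) = 1
      · exact ⟨fun _ => Or.inl ⟨hx, hy, huv⟩, fun _ => mmd_of_ones hid' hx hy hxy huv⟩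
      · constructor
        · intro hm
          have hu := mmd_forward_c hid' hx hy hxy huv hm
          refine Or.inr (Or.inr (Or.inl ⟨hx, hy, hu, ?_⟩))
          intro h
          apply huv
          nth_rewrite 2 [hu] at h
          exact h
        · rintro (⟨_, hy1, _⟩ | ⟨hx1, _, _⟩ | ⟨_, _, hu, hus⟩ | ⟨hy1, _, _, _⟩)
          · exact absurd hy1 hy
          · exact absurd hx hx1
          · exact mmd_c hid' hx hy hu hus
          · exact absurd hy1 hy
      · constructor
        · intro hm
          have hu := mmd_forward_c hid' hy hx hxy.symm (by rwa [mul_comm] at huv)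
            (mmd_symm hm)
          refine Or.inr (Or.inr (Or.inr ⟨hy, hx, hu.symm, ?_⟩))
          intro h
          apply huv
          nth_rewrite 2 [← hu] at h
          exact h
        · rintro (⟨hx1, _, _⟩ | ⟨_, hy1, _, _⟩ | ⟨hx1, _, _, _⟩ | ⟨_, _, hu, hus⟩)
          · exact absurd hx1 hx
          · exact absurd hy hy1
          · exact absurd hx1 hx
          · refine mmd_symm (mmd_c hid' hy hx hu.symm ?_)
            rw [← hu]
            exact hus
      · exact ⟨fun _ => Or.inr (Or.inl ⟨hx, hy, hef, huv⟩),
          fun _ => mmd_b hid' hx hy hxy hadj⟩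
end

section
/- Let R be a commutative ring with unity having some non-trivial idempotent. Then: (i) if |U(R)| = 1, the clean graph Cl(R) is a complete graph; (ii) if |U(R)| ≥ 2, two distinct vertices (e,u) and (f,v) of Cl(R) are mutually maximally distant if and only if either e = f = 0, or e ≠ 0, f ≠ 0, ef ≠ 0 and uv ≠ 1. -/
variable {V : Type*}

section CleanHelpers

open SimpleGraph

variable {R : Type*} [CommRing R]

private lemma cleanGraph_adj {x y : CleanVtx R} :
    (cleanGraph R).Adj x y ↔
      x ≠ y ∧ ((x.1 : R) * (y.1 : R) = 0 ∨ (x.2 : R) * (y.2 : R) = 1) := Iff.rfl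

/-- The vertex `(0,1)`. -/
private def zV (R : Type*) [CommRing R] : CleanVtx R := (⟨0, IsIdempotentElem.zero⟩, 1)

private lemma zV_fst : ((zV R).1 : R) = 0 := rfl

private lemma adj_of_fst_zero {x y : CleanVtx R} (h : (x.1 : R) = 0) (hne : x ≠ y) :
    (cleanGraph R).Adj x y :=
  ⟨hne, Or.inl (by rw [h, zero_mul])⟩

private lemma clean_preconnected : (cleanGraph R).Preconnected := by
  have key : ∀ a : CleanVtx R, (cleanGraph R).Reachable a (zV R) := by
    intro a
    by_cases h : a = zV R
    · rw [h]
    · exact ((adj_of_fst_zero (x := zV R) rfl (Ne.symm h)).symm).reachable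
  exact fun a b => (key a).trans (key b).symm

private lemma dist_zV_le_one (a : CleanVtx R) : (cleanGraph R).dist a (zV R) ≤ 1 := by
  by_cases h : a = zV R
  · rw [h, SimpleGraph.dist_self]; omega
  · rw [SimpleGraph.dist_eq_one_iff_adj.mpr ((adj_of_fst_zero (x := zV R) rfl (Ne.symm h)).symm)]

private lemma clean_dist_le_two (a b : CleanVtx R) : (cleanGraph R).dist a b ≤ 2 := by
  have : Nonempty (CleanVtx R) := ⟨zV R⟩
  have hconn : (cleanGraph R).Connected := ⟨clean_preconnected⟩
  have h1 := dist_zV_le_one a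
  have h2 := dist_zV_le_one b
  have h3 := hconn.dist_triangle (u := a) (v := zV R) (w := b)
  rw [SimpleGraph.dist_comm (G := cleanGraph R) (u := zV R) (v := b)] at h3
  omega

private lemma clean_two_le_dist {a b : CleanVtx R} (hne : a ≠ b)
    (hnadj : ¬ (cleanGraph R).Adj a b) : 2 ≤ (cleanGraph R).dist a b := by
  have h0 : 0 < (cleanGraph R).dist a b :=
    (clean_preconnected a b).pos_dist_of_ne hne
  have h1 : (cleanGraph R).dist a b ≠ 1 := fun h =>
    hnadj (SimpleGraph.dist_eq_one_iff_adj.mp h)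
  omega

/-- Core refutation: a neighbour of `x` that is neither `y` nor adjacent to `y`
refutes maximal distance of `y` from `x` when `x ~ y`. -/
private lemma not_max_core {x y w : CleanVtx R} (hadjxy : (cleanGraph R).Adj x y)
    (hadjxw : (cleanGraph R).Adj x w) (hwy : w ≠ y)
    (hnadj : ¬ (cleanGraph R).Adj y w) : ¬ IsMaxDistFrom (cleanGraph R) x y := by
  intro h
  have hle := h w hadjxw
  rw [SimpleGraph.dist_eq_one_iff_adj.mpr hadjxy] at hle
  have := clean_two_le_dist (Ne.symm hwy) hnadj
  omega

private lemma exists_unit {G : Type*} [Group G] [Nontrivial G] (v : G) :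
    ∃ s : G, s ≠ v ∧ s * v ≠ 1 := by
  by_cases h : v * v = 1
  · obtain ⟨s, hs⟩ := exists_ne v
    refine ⟨s, hs, fun h1 => hs ?_⟩
    rw [eq_inv_of_mul_eq_one_left h1, inv_eq_of_mul_eq_one_left h]
  · refine ⟨1, fun h1 => h ?_, fun h1 => h ?_⟩
    · rw [← h1, one_mul]
    · rw [one_mul] at h1; rw [h1, one_mul]

/-- Case M: `x·y = 0` with `y.1 ≠ 0` refutes `IsMaxDistFrom x y`. -/
private lemma not_max_orth [Nontrivial Rˣ] {x y : CleanVtx R} (hxy : x ≠ y)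
    (hef : (x.1 : R) * (y.1 : R) = 0) (hy0 : (y.1 : R) ≠ 0) :
    ¬ IsMaxDistFrom (cleanGraph R) x y := by
  obtain ⟨s, hs, hsv⟩ := exists_unit y.2
  set w : CleanVtx R := (y.1, s) with hw
  have hx1 : x.1 ≠ y.1 := by
    intro h
    rw [h, y.1.2] at hef
    exact hy0 hef
  refine not_max_core (w := w) ⟨hxy, Or.inl hef⟩
    ⟨fun h => hx1 (Prod.ext_iff.mp h).1, Or.inl hef⟩
    (fun h => hs (Prod.ext_iff.mp h).2) ?_
  rintro ⟨-, h | h⟩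
  · rw [y.1.2] at h; exact hy0 h
  · exact hsv (Units.ext (by rw [Units.val_mul, mul_comm]; exact h))

/-- Case B1: `x·y ≠ 0`, `u·v = 1` and `v² ≠ 1` refutes `IsMaxDistFrom x y`. -/
private lemma not_max_B1 [Nontrivial Rˣ] {e₀ : R} (h₀ : IsIdempotentElem e₀)
    (h₀0 : e₀ ≠ 0) (h₀1 : e₀ ≠ 1) {x y : CleanVtx R} (hxy : x ≠ y)
    (hef : (x.1 : R) * (y.1 : R) ≠ 0) (huv : (x.2 : R) * (y.2 : R) = 1)
    (hv2 : (y.2 : R) * (y.2 : R) ≠ 1) : ¬ IsMaxDistFrom (cleanGraph R) x y := by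
  have hu2 : x.2 ≠ y.2 := by
    intro h
    rw [h] at huv
    exact hv2 huv
  have hf0 : (y.1 : R) ≠ 0 := fun h => hef (by rw [h, mul_zero])
  -- choose the idempotent g
  obtain ⟨g, hg, hgf, hgne⟩ :
      ∃ g : R, IsIdempotentElem g ∧ (y.1 : R) * g ≠ 0 ∧ g ≠ (y.1 : R) := by
    by_cases hf1 : (y.1 : R) = 1
    · exact ⟨e₀, h₀, by rw [hf1, one_mul]; exact h₀0, by rw [hf1]; exact h₀1⟩
    · exact ⟨1, IsIdempotentElem.one, by rw [mul_one]; exact hf0, fun h => hf1 h.symm⟩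
  set w : CleanVtx R := (⟨g, hg⟩, y.2) with hw
  refine not_max_core (w := w) ⟨hxy, Or.inr huv⟩
    ⟨fun h => hu2 (Prod.ext_iff.mp h).2, Or.inr huv⟩
    (fun h => hgne (congrArg (fun p : CleanVtx R => (p.1 : R)) h)) ?_
  rintro ⟨-, h | h⟩
  · exact hgf h
  · exact hv2 h

end CleanHelpers
section CleanHelpers2

variable {R : Type*} [CommRing R]

private lemma maxdist_of_zero {x y : CleanVtx R} (hy : (y.1 : R) = 0) (hne : x ≠ y) :
    IsMaxDistFrom (cleanGraph R) x y := by
  intro w hw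
  by_cases hwy : w = y
  · rw [hwy, SimpleGraph.dist_self]; omega
  · rw [SimpleGraph.dist_eq_one_iff_adj.mpr (adj_of_fst_zero hy (Ne.symm hwy))]
    have : (cleanGraph R).dist x y ≠ 0 := by
      rw [SimpleGraph.dist_ne_zero_iff_ne_and_reachable]
      exact ⟨hne, clean_preconnected x y⟩
    omega

private lemma mmd_of_not_adj {x y : CleanVtx R} (hne : x ≠ y)
    (h : ¬ (cleanGraph R).Adj x y) : IsMMD (cleanGraph R) x y := by
  have hd : 2 ≤ (cleanGraph R).dist x y := clean_two_le_dist hne h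
  have hd' : 2 ≤ (cleanGraph R).dist y x := by rwa [SimpleGraph.dist_comm]
  exact ⟨fun w _ => le_trans (clean_dist_le_two y w) hd,
    fun w _ => le_trans (clean_dist_le_two x w) hd'⟩

end CleanHelpers2
private lemma not_max_B2 {R : Type*} [CommRing R] [Nontrivial Rˣ] {x y : CleanVtx R}
    (hxy : x ≠ y) (huv : (x.2 : R) * (y.2 : R) = 1) (huveq : x.2 = y.2)
    (hB : (y.1 : R) * (1 - (x.1 : R)) ≠ 0) : ¬ IsMaxDistFrom (cleanGraph R) x y := by
  obtain ⟨s, hs, hsu⟩ := exists_unit x.2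
  set w : CleanVtx R := (⟨1 - (x.1 : R), x.1.2.one_sub⟩, s) with hw
  refine not_max_core (w := w) ⟨hxy, Or.inr huv⟩
    ⟨fun h => hs ((congrArg Prod.snd h).symm), Or.inl ?_⟩
    (fun h => hs (by rw [huveq]; exact congrArg Prod.snd h)) ?_
  · show (x.1 : R) * (1 - (x.1 : R)) = 0
    rw [mul_one_sub, x.1.2, sub_self]
  · rintro ⟨-, h | h⟩
    · exact hB h
    · refine hsu (Units.ext ?_)
      rw [← huveq] at h
      rw [Units.val_mul, mul_comm]
      exact h

theorem statement_2 (R : Type*) [CommRing R]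
    (hid : ∃ e : R, IsIdempotentElem e ∧ e ≠ 0 ∧ e ≠ 1) :
    (Nat.card Rˣ = 1 → cleanGraph R = ⊤) ∧
    (Nontrivial Rˣ → ∀ x y : CleanVtx R, x ≠ y →
      (IsMMD (cleanGraph R) x y ↔
        ((x.1 : R) = 0 ∧ (y.1 : R) = 0) ∨
        ((x.1 : R) ≠ 0 ∧ (y.1 : R) ≠ 0 ∧ (x.1 : R) * (y.1 : R) ≠ 0 ∧
          (x.2 : R) * (y.2 : R) ≠ 1))) := by
  
  obtain ⟨e₀, h₀, h₀0, h₀1⟩ := hid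
  constructor
  · intro hcard
    have hsub : Subsingleton Rˣ := (Nat.card_eq_one_iff_unique.mp hcard).1
    ext x y
    rw [SimpleGraph.top_adj, cleanGraph_adj]
    constructor
    · exact fun h => h.1
    · intro hne
      refine ⟨hne, Or.inr ?_⟩
      have h1 : x.2 = 1 := Subsingleton.elim _ _
      have h2 : y.2 = 1 := Subsingleton.elim _ _
      rw [h1, h2, Units.val_one, one_mul]
  · intro hnt x y hxy
    constructor
    · intro hmmd
      by_cases hx0 : (x.1 : R) = 0
      · by_cases hy0 : (y.1 : R) = 0
        · exact Or.inl ⟨hx0, hy0⟩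
        · exact absurd hmmd.1 (not_max_orth hxy (by rw [hx0, zero_mul]) hy0)
      · by_cases hy0 : (y.1 : R) = 0
        · exact absurd hmmd.2 (not_max_orth hxy.symm (by rw [hy0, zero_mul]) hx0)
        · by_cases hef : (x.1 : R) * (y.1 : R) = 0
          · exact absurd hmmd.1 (not_max_orth hxy hef hy0)
          · by_cases huv : (x.2 : R) * (y.2 : R) = 1
            · by_cases hv2 : (y.2 : R) * (y.2 : R) = 1
              · -- B2 : u = v
                have huveq : x.2 = y.2 := Units.ext (by
                  calc (x.2 : R) = (x.2 : R) * ((y.2 : R) * (y.2 : R)) := by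
                        rw [hv2, mul_one]
                    _ = ((x.2 : R) * (y.2 : R)) * (y.2 : R) := by ring
                    _ = (y.2 : R) := by rw [huv, one_mul])
                have he1f : (x.1 : R) ≠ (y.1 : R) := fun h =>
                  hxy (Prod.ext (Subtype.ext h) huveq)
                by_cases hB : (y.1 : R) * (1 - (x.1 : R)) = 0
                · have hB' : (x.1 : R) * (1 - (y.1 : R)) ≠ 0 := by
                    intro h
                    apply he1f
                    rw [mul_one_sub, sub_eq_zero] at h hB
                    rw [h, mul_comm]
                    exact hB.symm
                  have huv' : (y.2 : R) * (x.2 : R) = 1 := by rwa [mul_comm]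
                  exact absurd hmmd.2 (not_max_B2 hxy.symm huv' huveq.symm hB')
                · exact absurd hmmd.1 (not_max_B2 hxy huv huveq hB)
              · exact absurd hmmd.1 (not_max_B1 h₀ h₀0 h₀1 hxy hef huv hv2)
            · exact Or.inr ⟨hx0, hy0, hef, huv⟩
    · rintro (⟨hx0, hy0⟩ | ⟨hx0, hy0, hef, huv⟩)
      · exact ⟨maxdist_of_zero hy0 hxy, maxdist_of_zero hx0 hxy.symm⟩
      · refine mmd_of_not_adj hxy ?_
        rintro ⟨-, h | h⟩
        · exact hef h
        · exact huv h
end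

section
/- Let R be a commutative ring with unity having some non-trivial idempotent, with U''(R) = ∅ and such that Cl₂(R) is not a complete graph. Then the strong resolving graph of Cl₂(R) is the disjoint union of the complete graph on the vertex set {(1,u) : u ∈ U(R)} (a copy of K_{|U(R)|}) and the graph K, where K has vertex set {(e,u) : e a non-trivial idempotent of R, u ∈ U(R)} and two vertices (e,u), (f,v) of K are adjacent if and only if ef ≠ 0 and uv ≠ 1. -/
variable {V : Type*}

/-
When every unit squares to `1`, two vertices of `Cl₂(R)` are adjacent iff their idempotents are
orthogonal or their units coincide. For a non-trivial idempotent `g`, the walk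
`(e,u) — (g,u) — (1-g,v) — (f,v)` and the shortcut `(e,u) — (1-e,v) — (f,v)` (for `e ≠ 1`)
show that distances are at most `3`, and at most `2` unless both idempotents are `1`; two vertices
`(1,u) ≠ (1,v)` have no common neighbour, so they are at distance exactly `3`. Adjacent
vertices are never mutually maximally distant, since no two of them have the same closed
neighbourhood, and a non-adjacent pair `(1,u)`, `(f,v)` with `f ≠ 1` is not either, because
`(1,v)` is a neighbour of `(f,v)` at distance `3` from `(1,u)`. All remaining pairs realise
the largest possible distance from either end.
-/

namespace SimpleGraph

variable {V : Type*} {G : SimpleGraph V} {u v w : V}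

lemma isMaxDistFrom_iff_edist (hG : G.Preconnected) :
    IsMaxDistFrom G u v ↔ ∀ w ∈ G.neighborSet u, G.edist v w ≤ G.edist u v := by
  refine forall₂_congr fun w _ => ?_
  rw [← (hG v w).coe_dist_eq_edist, ← (hG u v).coe_dist_eq_edist, Nat.cast_le]

lemma not_isMaxDistFrom_of_adj (hG : G.Preconnected) (huv : G.Adj u v) (huw : G.Adj u w)
    (hwv : w ≠ v) (hvw : ¬G.Adj v w) : ¬IsMaxDistFrom G u v := by
  intro h
  have hle := (isMaxDistFrom_iff_edist hG).mp h w huw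
  rw [edist_eq_one_iff_adj.mpr huv, edist_le_one_iff_adj_or_eq] at hle
  exact hle.elim hvw hwv.symm

end SimpleGraph

namespace Clean2

open SimpleGraph

variable {R : Type*} [CommRing R]

def idem (x : clean2Set R) : R := x.1.1

def unit (x : clean2Set R) : Rˣ := x.1.2

lemma idem_isIdempotentElem (x : clean2Set R) : IsIdempotentElem (idem x) := x.1.1.2

lemma idem_ne_zero (x : clean2Set R) : idem x ≠ 0 := x.2

def mk (e : R) (he : IsIdempotentElem e) (h0 : e ≠ 0) (u : Rˣ) : clean2Set R :=
  ⟨(⟨e, he⟩, u), h0⟩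

@[simp] lemma idem_mk (e : R) (he h0) (u : Rˣ) : idem (mk e he h0 u) = e := rfl

lemma ext_iff {x y : clean2Set R} : x = y ↔ idem x = idem y ∧ unit x = unit y := by
  rw [Subtype.ext_iff, Prod.ext_iff, Subtype.ext_iff]
  rfl

lemma units_mul_self_eq_one (hU'' : uSecond R = ∅) (u : Rˣ) : u * u = 1 :=
  Units.ext (not_not.mp fun h => (Set.eq_empty_iff_forall_notMem.mp hU'' u) h)

lemma unit_mul_eq_one_iff (hU : ∀ u : Rˣ, u * u = 1) {u v : Rˣ} :
    (u : R) * v = 1 ↔ u = v := by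
  rw [← Units.val_mul, ← Units.val_one, Units.val_inj, ← hU u, mul_right_inj, eq_comm]

lemma adj_iff (hU : ∀ u : Rˣ, u * u = 1) {x y : clean2Set R} :
    (clean2Graph R).Adj x y ↔ x ≠ y ∧ (idem x * idem y = 0 ∨ unit x = unit y) := by
  rw [← unit_mul_eq_one_iff hU, ← Subtype.coe_ne_coe]
  rfl

lemma edist_le_one (hU : ∀ u : Rˣ, u * u = 1) {x y : clean2Set R}
    (h : idem x * idem y = 0 ∨ unit x = unit y) : (clean2Graph R).edist x y ≤ 1 := by
  rw [edist_le_one_iff_adj_or_eq, adj_iff hU]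
  tauto

lemma edist_le_two (hU : ∀ u : Rˣ, u * u = 1) {x : clean2Set R} (hx : idem x ≠ 1)
    (y : clean2Set R) : (clean2Graph R).edist x y ≤ 2 := by
  have hx' := idem_isIdempotentElem x
  let w := mk (1 - idem x) hx'.one_sub (sub_ne_zero.mpr hx.symm) (unit y)
  calc (clean2Graph R).edist x y ≤ (clean2Graph R).edist x w + (clean2Graph R).edist w y :=
        SimpleGraph.edist_triangle
    _ ≤ 1 + 1 := by
        gcongr
        · exact edist_le_one hU (Or.inl (by simp [w, mul_sub, hx'.eq]))
        · exact edist_le_one hU (Or.inr rfl)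
    _ = 2 := by norm_num

lemma edist_le_three (hU : ∀ u : Rˣ, u * u = 1)
    (hid : ∃ e : R, IsIdempotentElem e ∧ e ≠ 0 ∧ e ≠ 1) (x y : clean2Set R) :
    (clean2Graph R).edist x y ≤ 3 := by
  obtain ⟨g, hg, hg0, hg1⟩ := hid
  let w := mk g hg hg0 (unit x)
  calc (clean2Graph R).edist x y ≤ (clean2Graph R).edist x w + (clean2Graph R).edist w y :=
        SimpleGraph.edist_triangle
    _ ≤ 1 + 2 := add_le_add (edist_le_one hU (Or.inr rfl)) (edist_le_two hU (x := w) hg1 y)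
    _ = 3 := by norm_num

lemma preconnected (hU : ∀ u : Rˣ, u * u = 1)
    (hid : ∃ e : R, IsIdempotentElem e ∧ e ≠ 0 ∧ e ≠ 1) : (clean2Graph R).Preconnected :=
  fun x y => reachable_of_edist_ne_top (ne_top_of_le_ne_top (by decide) (edist_le_three hU hid x y))

lemma nontrivial_units (hnc : clean2Graph R ≠ ⊤) : Nontrivial Rˣ := by
  by_contra h
  rw [not_nontrivial_iff_subsingleton] at h
  refine hnc (eq_top_iff.mpr fun x y hxy => ⟨Subtype.coe_ne_coe.mpr hxy, Or.inr ?_⟩)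
  change (unit x : R) * unit y = 1
  rw [Subsingleton.elim (unit x) 1, Subsingleton.elim (unit y) 1, Units.val_one, one_mul]

lemma unit_eq_of_adj_of_idem_eq_one (hU : ∀ u : Rˣ, u * u = 1) {x w : clean2Set R}
    (hx : idem x = 1) (h : (clean2Graph R).Adj x w) : unit x = unit w :=
  ((adj_iff hU).mp h).2.resolve_left (by rw [hx, one_mul]; exact idem_ne_zero w)

lemma edist_eq_three (hU : ∀ u : Rˣ, u * u = 1)
    (hid : ∃ e : R, IsIdempotentElem e ∧ e ≠ 0 ∧ e ≠ 1) {x y : clean2Set R}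
    (hx : idem x = 1) (hy : idem y = 1) (hu : unit x ≠ unit y) :
    (clean2Graph R).edist x y = 3 := by
  have hnadj : ¬(clean2Graph R).Adj x y := fun h => hu (unit_eq_of_adj_of_idem_eq_one hU hx h)
  have hcommon : (clean2Graph R).commonNeighbors x y = ∅ :=
    Set.eq_empty_iff_forall_notMem.mpr fun w hw => hu <|
      (unit_eq_of_adj_of_idem_eq_one hU hx hw.1).trans
        (unit_eq_of_adj_of_idem_eq_one hU hy hw.2).symm
  have h2 : 2 < (clean2Graph R).edist x y :=
    two_lt_edist_iff.mpr ⟨fun h => hu (congrArg unit h), hnadj, hcommon⟩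
  exact le_antisymm (edist_le_three hU hid x y) (Order.add_one_le_of_lt h2)

lemma not_isMaxDistFrom_of_adj_of_unit_ne (hU : ∀ u : Rˣ, u * u = 1)
    (hid : ∃ e : R, IsIdempotentElem e ∧ e ≠ 0 ∧ e ≠ 1) {x y : clean2Set R}
    (h : (clean2Graph R).Adj x y) (hu : unit x ≠ unit y) :
    ¬IsMaxDistFrom (clean2Graph R) x y := by
  have hy := idem_isIdempotentElem y
  have he : idem x ≠ idem y := by
    intro he
    apply idem_ne_zero y
    rw [← hy.eq]
    nth_rw 1 [← he]
    exact ((adj_iff hU).mp h).2.resolve_right hu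
  let w := mk (idem y) hy (idem_ne_zero y) (unit x)
  refine not_isMaxDistFrom_of_adj (preconnected hU hid) h (w := w) ?_
    (fun h => hu (show unit w = unit y from congrArg unit h)) fun h => ?_
  · exact (adj_iff hU).mpr
      ⟨fun h => he (show idem x = idem w from congrArg idem h), Or.inr rfl⟩
  · exact ((adj_iff hU).mp h).2.elim (by simpa [w, hy.eq] using idem_ne_zero y) (Ne.symm hu)

lemma not_isMaxDistFrom_of_unit_eq (hU : ∀ u : Rˣ, u * u = 1)
    (hid : ∃ e : R, IsIdempotentElem e ∧ e ≠ 0 ∧ e ≠ 1) {x y : clean2Set R}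
    (h : (clean2Graph R).Adj x y) (hu : unit x = unit y) {v : Rˣ} (hv : v ≠ unit x)
    (he : idem y * (1 - idem x) ≠ 0) : ¬IsMaxDistFrom (clean2Graph R) x y := by
  have hx := idem_isIdempotentElem x
  let w := mk (1 - idem x) hx.one_sub (right_ne_zero_of_mul he) v
  refine not_isMaxDistFrom_of_adj (preconnected hU hid) h (w := w) ?_
    (fun h => hv (hu ▸ congrArg unit h)) fun h => ?_
  · exact (adj_iff hU).mpr ⟨fun h => hv (congrArg unit h).symm,
      Or.inl (by simp [w, mul_sub, hx.eq])⟩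
  · exact ((adj_iff hU).mp h).2.elim he (hu ▸ Ne.symm hv)

lemma not_isMMD_of_adj (hU : ∀ u : Rˣ, u * u = 1)
    (hid : ∃ e : R, IsIdempotentElem e ∧ e ≠ 0 ∧ e ≠ 1) [Nontrivial Rˣ]
    {x y : clean2Set R}
    (h : (clean2Graph R).Adj x y) : ¬IsMMD (clean2Graph R) x y := by
  by_cases hu : unit x = unit y
  · obtain ⟨v, hv⟩ := exists_ne (unit x)
    have he : idem x ≠ idem y := fun he => h.ne (ext_iff.mpr ⟨he, hu⟩)
    by_cases hyx : idem y * (1 - idem x) = 0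
    · have hxy : idem x * (1 - idem y) ≠ 0 := fun hxy => he (by linear_combination hxy - hyx)
      exact fun hM => not_isMaxDistFrom_of_unit_eq hU hid h.symm hu.symm (hu ▸ hv) hxy hM.2
    · exact fun hM => not_isMaxDistFrom_of_unit_eq hU hid h hu hv hyx hM.1
  · exact fun hM => not_isMaxDistFrom_of_adj_of_unit_ne hU hid h hu hM.1

lemma not_isMaxDistFrom_of_idem_eq_one (hU : ∀ u : Rˣ, u * u = 1)
    (hid : ∃ e : R, IsIdempotentElem e ∧ e ≠ 0 ∧ e ≠ 1) {x y : clean2Set R}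
    (hx : idem x = 1) (hy : idem y ≠ 1) (hu : unit x ≠ unit y) :
    ¬IsMaxDistFrom (clean2Graph R) y x := by
  let w := mk 1 .one (hx ▸ idem_ne_zero x) (unit y)
  have hyw : (clean2Graph R).Adj y w :=
    (adj_iff hU).mpr ⟨fun h => hy (congrArg idem h), Or.inr rfl⟩
  intro hM
  have hle := (isMaxDistFrom_iff_edist (preconnected hU hid)).mp hM w hyw
  rw [edist_eq_three hU hid (y := w) hx rfl hu] at hle
  exact absurd (hle.trans (edist_le_two hU hy x)) (by decide)

lemma isMMD_of_idem_eq_one (hU : ∀ u : Rˣ, u * u = 1)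
    (hid : ∃ e : R, IsIdempotentElem e ∧ e ≠ 0 ∧ e ≠ 1) {x y : clean2Set R}
    (hx : idem x = 1) (hy : idem y = 1) (hu : unit x ≠ unit y) :
    IsMMD (clean2Graph R) x y := by
  have hG := preconnected hU hid
  have h3 := edist_eq_three hU hid hx hy hu
  refine ⟨(isMaxDistFrom_iff_edist hG).mpr fun w _ => ?_, (isMaxDistFrom_iff_edist hG).mpr
    fun w _ => ?_⟩
  · rw [h3]; exact edist_le_three hU hid y w
  · rw [edist_comm (u := y), h3]; exact edist_le_three hU hid x w

lemma isMMD_of_idem_ne_one (hU : ∀ u : Rˣ, u * u = 1)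
    (hid : ∃ e : R, IsIdempotentElem e ∧ e ≠ 0 ∧ e ≠ 1) {x y : clean2Set R}
    (hx : idem x ≠ 1) (hy : idem y ≠ 1) (he : idem x * idem y ≠ 0)
    (hu : unit x ≠ unit y) : IsMMD (clean2Graph R) x y := by
  have hG := preconnected hU hid
  have h1 : 1 < (clean2Graph R).edist x y := by
    rw [← not_le, edist_le_one_iff_adj_or_eq, adj_iff hU]
    rintro (⟨-, h | h⟩ | h)
    exacts [he h, hu h, hu (congrArg unit h)]
  have h2 : (clean2Graph R).edist x y = 2 :=
    le_antisymm (edist_le_two hU hx y) (Order.add_one_le_of_lt h1)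
  refine ⟨(isMaxDistFrom_iff_edist hG).mpr fun w _ => ?_, (isMaxDistFrom_iff_edist hG).mpr
    fun w _ => ?_⟩
  · rw [h2]; exact edist_le_two hU hy w
  · rw [edist_comm (u := y), h2]; exact edist_le_two hU hx w

lemma isMMD_iff (hU : ∀ u : Rˣ, u * u = 1)
    (hid : ∃ e : R, IsIdempotentElem e ∧ e ≠ 0 ∧ e ≠ 1) [Nontrivial Rˣ]
    {x y : clean2Set R}
    (hxy : x ≠ y) :
    IsMMD (clean2Graph R) x y ↔ (idem x = 1 ∧ idem y = 1) ∨
      (idem x ≠ 1 ∧ idem y ≠ 1 ∧ idem x * idem y ≠ 0 ∧ unit x ≠ unit y) := by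
  constructor
  · intro hM
    have ⟨he, hu⟩ : idem x * idem y ≠ 0 ∧ unit x ≠ unit y := by
      simpa [adj_iff hU, hxy, not_or] using mt (not_isMMD_of_adj hU hid) (not_not.mpr hM)
    by_cases hx : idem x = 1 <;> by_cases hy : idem y = 1
    · exact Or.inl ⟨hx, hy⟩
    · exact absurd hM.2 (not_isMaxDistFrom_of_idem_eq_one hU hid hx hy hu)
    · exact absurd hM.1 (not_isMaxDistFrom_of_idem_eq_one hU hid hy hx (Ne.symm hu))
    · exact Or.inr ⟨hx, hy, he, hu⟩
  · rintro (⟨hx, hy⟩ | ⟨hx, hy, he, hu⟩)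
    · exact isMMD_of_idem_eq_one hU hid hx hy
        fun hu => hxy (ext_iff.mpr ⟨hx.trans hy.symm, hu⟩)
    · exact isMMD_of_idem_ne_one hU hid hx hy he hu

lemma mem_graphBoundary (hU : ∀ u : Rˣ, u * u = 1)
    (hid : ∃ e : R, IsIdempotentElem e ∧ e ≠ 0 ∧ e ≠ 1) [Nontrivial Rˣ]
    (x : clean2Set R) :
    x ∈ graphBoundary (clean2Graph R) := by
  obtain ⟨v, hv⟩ := exists_ne (unit x)
  have hxy : x ≠ mk (idem x) (idem_isIdempotentElem x) (idem_ne_zero x) v :=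
    fun h => hv (congrArg unit h).symm
  refine ⟨_, hxy, (isMMD_iff hU hid hxy).mpr ?_⟩
  by_cases hx : idem x = 1
  · exact Or.inl ⟨hx, hx⟩
  · exact Or.inr ⟨hx, hx, by simpa [(idem_isIdempotentElem x).eq] using idem_ne_zero x,
      Ne.symm hv⟩

end Clean2

open Clean2 in
theorem statement_3 (R : Type*) [CommRing R]
    (hid : ∃ e : R, IsIdempotentElem e ∧ e ≠ 0 ∧ e ≠ 1)
    (hU'' : uSecond R = ∅)
    (hnc : clean2Graph R ≠ ⊤) :
    (∀ x : clean2Set R, x ∈ graphBoundary (clean2Graph R)) ∧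
    (∀ x y : clean2Set R, x ≠ y →
      ((srGraph (clean2Graph R)).Adj x y ↔
        ((x.1.1 : R) = 1 ∧ (y.1.1 : R) = 1) ∨
        ((x.1.1 : R) ≠ 1 ∧ (y.1.1 : R) ≠ 1 ∧ (x.1.1 : R) * (y.1.1 : R) ≠ 0 ∧
          (x.1.2 : R) * (y.1.2 : R) ≠ 1))) := by
  have hU := units_mul_self_eq_one hU''
  have := nontrivial_units hnc
  refine ⟨mem_graphBoundary hU hid, fun x y hxy => ?_⟩
  change x ≠ y ∧ IsMMD _ x y ↔ _
  rw [isMMD_iff hU hid hxy, and_iff_right hxy, ne_eq (unit x), ← unit_mul_eq_one_iff hU]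
  rfl
end
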